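/- Let μ > 1 and let z = (z₁, z₂) and z' = (z₁', z₂') be points of Ω̃ with φ̃(z) = φ̃(z'). Then there exists k ∈ ℤ such that z₁' = e^{2πμki} z₁ and z₂' = e^{πμk} z₂. -/

import Mathlib

open MeasureTheory

/-- `log^t(z)`: the branch of the logarithm of `z` whose imaginary part lies in
`[log t², log t² + 2π)`. -/
noncomputable def logT (t : ℝ) (z : ℂ) : ℂ :=
  Complex.log z +
    ((2 * Real.pi * (⌈(Real.log (t ^ 2) - (Complex.log z).im) / (2 * Real.pi)⌉ : ℤ) : ℝ) : ℂ) *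
      Complex.I

/-- `ρ̃(z) = |z₁ + e^{i log|z₂|²}|² - 1`. -/
noncomputable def rhoT (z : ℂ × ℂ) : ℝ :=
  ‖z.1 + Complex.exp (Complex.I * (Real.log (‖z.2‖ ^ 2) : ℂ))‖ ^ 2 - 1

/-- `Ω̃ = {z ∈ ℂ × (ℂ∖{0}) : ρ̃(z) < 0}`. -/
def OmegaT : Set (ℂ × ℂ) := {z | z.2 ≠ 0 ∧ rhoT z < 0}

/-- `φ̃(z) = (exp((log^{|z₂|}(z₁) - log 2)/μ), z₂ exp(½(π + i log^{|z₂|}(z₁))))`. -/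
noncomputable def phiT (μ : ℝ) (z : ℂ × ℂ) : ℂ × ℂ :=
  (Complex.exp ((logT ‖z.2‖ z.1 - (Real.log 2 : ℂ)) / (μ : ℂ)),
   z.2 * Complex.exp (((Real.pi : ℂ) + Complex.I * logT ‖z.2‖ z.1) / 2))

/-- The Reinhardt domain
`D_μ = {w ∈ ℂ² : 0 < |w₁| < 1 and |log |w₂|²| < arccos(|w₁|^μ)}`. -/
def Dset (μ : ℝ) : Set (ℂ × ℂ) :=
  {w | 0 < ‖w.1‖ ∧ ‖w.1‖ < 1 ∧
    |Real.log (‖w.2‖ ^ 2)| < Real.arccos (‖w.1‖ ^ μ)}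

/-! Equality of the first components of `φ̃` forces the two branch logarithms `L, L'` of `z₁, z₁'`
to differ by `2πiμk`. Exponentiating gives `z₁' = e^{2πiμk} z₁`, and the same shift turns
`e^{(π + iL')/2}` into `e^{-πμk} e^{(π + iL)/2}`, which the second components convert into
`z₂' = e^{πμk} z₂`. -/

open Complex
open scoped Real

lemma exp_logT (t : ℝ) {z : ℂ} (hz : z ≠ 0) : exp (logT t z) = z := by
  rw [logT, exp_add, exp_log hz]
  convert mul_one z using 2
  convert exp_int_mul_two_pi_mul_I
    ⌈(Real.log (t ^ 2) - (log z).im) / (2 * π)⌉ using 2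
  push_cast
  ring

lemma fst_ne_zero_of_mem_OmegaT {z : ℂ × ℂ} (hz : z ∈ OmegaT) : z.1 ≠ 0 := by
  intro h0
  have hρ := hz.2
  rw [rhoT, h0, zero_add, norm_exp_I_mul_ofReal] at hρ
  norm_num at hρ

lemma exists_int_eq_add_of_exp_div_eq {μ : ℂ} (hμ : μ ≠ 0) {a b c : ℂ}
    (h : exp ((a - c) / μ) = exp ((b - c) / μ)) :
    ∃ k : ℤ, b = 2 * π * μ * k * I + a := by
  obtain ⟨n, hn⟩ := exp_eq_exp_iff_exists_int.mp h
  refine ⟨-n, ?_⟩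
  field_simp at hn
  push_cast
  linear_combination -hn

lemma exp_half_pi_add_I_mul_shift (μ : ℂ) (k : ℤ) (L : ℂ) :
    exp ((π + I * (2 * π * μ * k * I + L)) / 2) = exp (-(π * μ * k)) * exp ((π + I * L) / 2) := by
  rw [← exp_add]
  congr 1
  linear_combination (π * μ * k) * I_mul_I

theorem phiT_fibers (μ : ℝ) (hμ : 1 < μ) (z z' : ℂ × ℂ)
    (hz : z ∈ OmegaT) (hz' : z' ∈ OmegaT) (h : phiT μ z = phiT μ z') :
    ∃ k : ℤ, z'.1 = Complex.exp (2 * (Real.pi : ℂ) * (μ : ℂ) * (k : ℂ) * Complex.I) * z.1 ∧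
      z'.2 = Complex.exp ((Real.pi : ℂ) * (μ : ℂ) * (k : ℂ)) * z.2 := by
  have hμ0 : (μ : ℂ) ≠ 0 := ofReal_ne_zero.mpr (by linarith)
  obtain ⟨h₁, h₂⟩ := Prod.ext_iff.mp h
  obtain ⟨k, hk⟩ := exists_int_eq_add_of_exp_div_eq hμ0 h₁
  refine ⟨k, ?_, ?_⟩
  · rw [← exp_logT ‖z'.2‖ (fst_ne_zero_of_mem_OmegaT hz'), hk, exp_add,
      exp_logT _ (fst_ne_zero_of_mem_OmegaT hz)]
  · simp only [phiT] at h₂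
    rw [hk, exp_half_pi_add_I_mul_shift, exp_neg] at h₂
    have hE := exp_ne_zero ((π + I * logT ‖z.2‖ z.1) / 2)
    have hE' := exp_ne_zero (π * μ * k)
    field_simp at h₂
    linear_combination -h₂
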